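/- arXiv:1011.2550 — 4 statements merged into one kernel-verified Lean document; each statement's English description precedes it below -/
import Mathlib

section
/- Let φ : ℝ → ℝ be a smooth function with φ'(t) > 0 for all t, φ(0) = 0 and φ'(0) = 1, and for k ≥ 1 set a_k(φ) := φ⁽ᵏ⁾(0)/k!. Then for every n ≥ 1, the derivative at t = 0 of the function t ↦ φ⁽ⁿ⁾(t)/(n!·φ'(t)) equals (n+1)·a_{n+1}(φ) − 2·a₂(φ)·a_n(φ). -/
/-- For `φ ∈ G₂` (smooth, everywhere positive derivative, `φ 0 = 0`, `φ' 0 = 1`) with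
Taylor coefficients `a_k(φ) = φ⁽ᵏ⁾(0)/k!`, the derivative at `t = 0` of
`t ↦ φ⁽ⁿ⁾(t)/(n! φ'(t))` equals `(n+1) a_{n+1}(φ) - 2 a₂(φ) a_n(φ)`. -/
theorem stmt5 (φ : ℝ → ℝ) (hφ : ContDiff ℝ (⊤ : ℕ∞) φ) (hφ' : ∀ t, 0 < deriv φ t)
    (hφ0 : φ 0 = 0) (hφ1 : deriv φ 0 = 1) (n : ℕ) (hn : 1 ≤ n) :
    deriv (fun t => iteratedDeriv n φ t / ((n.factorial : ℝ) * deriv φ t)) 0 =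
      ((n : ℝ) + 1) * (iteratedDeriv (n + 1) φ 0 / ((n + 1).factorial : ℝ)) -
        2 * (iteratedDeriv 2 φ 0 / ((Nat.factorial 2 : ℕ) : ℝ)) *
          (iteratedDeriv n φ 0 / (n.factorial : ℝ)) := by
  have hd : ∀ k : ℕ, Differentiable ℝ (iteratedDeriv k φ) := fun k => by
    rw [iteratedDeriv_eq_iterate]
    exact ((hφ.of_le (by simp)).iterate_deriv k).differentiable (by simp)
  have hf : DifferentiableAt ℝ (iteratedDeriv n φ) 0 := (hd n) 0
  have hd1 : Differentiable ℝ (deriv φ) := by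
    have := hd 1
    simpa [iteratedDeriv_one] using this
  have hg : DifferentiableAt ℝ (fun t => (n.factorial : ℝ) * deriv φ t) 0 :=
    (hd1 0).const_mul _
  have hg0 : (n.factorial : ℝ) * deriv φ 0 ≠ 0 := by
    rw [hφ1]; simp [Nat.factorial_ne_zero]
  rw [deriv_fun_div hf hg hg0]
  have e1 : deriv (iteratedDeriv n φ) 0 = iteratedDeriv (n + 1) φ 0 := by
    rw [iteratedDeriv_succ]
  have e2 : deriv (fun t => (n.factorial : ℝ) * deriv φ t) 0
      = (n.factorial : ℝ) * iteratedDeriv 2 φ 0 := by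
    rw [deriv_const_mul _ (hd1 0)]
    congr 1
    rw [show (2 : ℕ) = 1 + 1 from rfl, iteratedDeriv_succ, iteratedDeriv_one]
  rw [e1, e2, hφ1]
  have hnf : (n.factorial : ℝ) ≠ 0 := by exact_mod_cast Nat.factorial_ne_zero n
  have h1 : ((n + 1).factorial : ℝ) = ((n : ℝ) + 1) * n.factorial := by
    rw [Nat.factorial_succ]; push_cast; ring
  rw [h1]
  have hn1 : (n : ℝ) + 1 ≠ 0 := by positivity
  field_simp
  ring
end

section
/- Let A = ℝ[a₂, a₃, a₄, …] be the polynomial ℝ-algebra in countably many variables a_n indexed by integers n ≥ 2, and adopt the conventions a₁ = 1 and a_n = 0 for n ≤ 0. Let Δ : A → A ⊗ A be the unique ℝ-algebra homomorphism with Δ(a_n) = Σ_{k=1}^{n} (Σ_{l₁+⋯+l_k=n, lᵢ≥1} a_{l₁}a_{l₂}⋯a_{l_k}) ⊗ a_k for every n ≥ 2. Then Δ is coassociative: (Δ ⊗ id) ∘ Δ = (id ⊗ Δ) ∘ Δ as algebra maps A → A ⊗ A ⊗ A. -/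
open scoped TensorProduct

/-- The Faà di Bruno algebra: the polynomial `ℝ`-algebra on variables `a_n`, `n ≥ 2`. -/
abbrev FdB : Type := MvPolynomial {m : ℕ // 2 ≤ m} ℝ

/-- The generators `a_n` of the Faà di Bruno algebra, with the conventions `a₁ = 1`
and `a_n = 0` for `n ≤ 0`. -/
noncomputable def FdBgen (n : ℕ) : FdB :=
  if h : 2 ≤ n then MvPolynomial.X ⟨n, h⟩ else if n = 1 then 1 else 0

/-- The value of the Faà di Bruno coproduct on the generator `a_n`:
`Δ(a_n) = Σ_{k=1}^n (Σ_{l₁+⋯+l_k=n, lᵢ≥1} a_{l₁}⋯a_{l_k}) ⊗ a_k`. -/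
noncomputable def FdBcoprodVal (n : ℕ) : FdB ⊗[ℝ] FdB :=
  ∑ k ∈ Finset.Icc 1 n,
    (∑ l ∈ (Finset.Nat.antidiagonalTuple k n).filter (fun l => ∀ i, 1 ≤ l i),
        ∏ i, FdBgen (l i)) ⊗ₜ[ℝ] FdBgen k

/-!
A character `ι : FdB → C` is the formal diffeomorphism `x + ∑ ι(a_n) xⁿ` with coefficients
in `C`. The defining formula for `Δ(a_n)` is Faà di Bruno's formula for the `n`-th coefficient
of a composite `g ∘ f` of power series without constant term, so the series of `ψ ∘ Δ` is the
composite of the series of the two tensor factors of `ψ`. On `FdB ⊗ FdB ⊗ FdB` both sides of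
coassociativity thus give the composite of the three slot series, bracketed in the two possible
ways, and these agree by associativity of substitution of power series.
-/

open Finset PowerSeries Algebra.TensorProduct

namespace PowerSeries

theorem coeff_pow_eq_sum_antidiagonalTuple {R : Type*} [CommSemiring R] (φ : R⟦X⟧) (k n : ℕ) :
    coeff n (φ ^ k) = ∑ l ∈ Nat.antidiagonalTuple k n, ∏ i, coeff (l i) φ := by
  rw [← piAntidiag_univ_fin_eq_antidiagonalTuple, ← Fin.prod_const, coeff_prod,
    finsuppAntidiag, sum_map, ← sum_attach (piAntidiag univ n)]
  rfl

theorem coeff_subst_eq_sum_compositions {R : Type*} [CommRing R] {φ ψ : R⟦X⟧}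
    (hφ : constantCoeff φ = 0) (hψ : constantCoeff ψ = 0) (m : ℕ) :
    coeff m (ψ.subst φ) = ∑ k ∈ Icc 1 m,
      (∑ l ∈ (Nat.antidiagonalTuple k m).filter (fun l => ∀ i, 1 ≤ l i), ∏ i, coeff (l i) φ) *
        coeff k ψ := by
  have hpow_high : ∀ k, m < k → coeff m (φ ^ k) = 0 := fun k hk =>
    X_pow_dvd_iff.mp (pow_dvd_pow_of_dvd (X_dvd_iff.mpr hφ) k) m hk
  rw [coeff_subst' (HasSubst.of_constantCoeff_zero' hφ),
    finsum_eq_sum_of_support_subset (s := Icc 1 m)]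
  · refine sum_congr rfl fun k _ => ?_
    rw [smul_eq_mul, mul_comm, coeff_pow_eq_sum_antidiagonalTuple]
    congr 1
    refine (sum_filter_of_ne fun l _ hne i => ?_).symm
    by_contra! hli
    refine hne (prod_eq_zero (mem_univ i) ?_)
    rw [Nat.lt_one_iff.mp hli, coeff_zero_eq_constantCoeff_apply, hφ]
  · intro k hk
    rw [Function.mem_support] at hk
    rw [coe_Icc, Set.mem_Icc]
    constructor
    · by_contra! hk0
      rw [Nat.lt_one_iff.mp hk0, coeff_zero_eq_constantCoeff_apply, hψ, zero_smul] at hk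
      exact hk rfl
    · by_contra! hkm
      rw [hpow_high k hkm, smul_zero] at hk
      exact hk rfl

end PowerSeries

@[simp] theorem FdBgen_zero : FdBgen 0 = 0 := by simp [FdBgen]

@[simp] theorem FdBgen_one : FdBgen 1 = 1 := by simp [FdBgen]

theorem FdBcoprodVal_zero : FdBcoprodVal 0 = 0 := by simp [FdBcoprodVal]

theorem FdBcoprodVal_one : FdBcoprodVal 1 = 1 := by
  simp [FdBcoprodVal, Nat.antidiagonalTuple_one, filter_singleton, Algebra.TensorProduct.one_def]

theorem map_FdBgen_of_map_X (Δ : FdB →ₐ[ℝ] FdB ⊗[ℝ] FdB)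
    (hΔ : ∀ (n : ℕ) (h : 2 ≤ n), Δ (MvPolynomial.X ⟨n, h⟩) = FdBcoprodVal n) (m : ℕ) :
    Δ (FdBgen m) = FdBcoprodVal m := by
  rcases Nat.lt_or_ge m 2 with h | h
  · interval_cases m
    · rw [FdBgen_zero, map_zero, FdBcoprodVal_zero]
    · rw [FdBgen_one, map_one, FdBcoprodVal_one]
  · rw [FdBgen, dif_pos h, hΔ]

namespace FdB

variable {C : Type*} [CommRing C] [Algebra ℝ C]

noncomputable def series (ι : FdB →ₐ[ℝ] C) : C⟦X⟧ := mk fun m => ι (FdBgen m)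

theorem constantCoeff_series (ι : FdB →ₐ[ℝ] C) : constantCoeff (series ι) = 0 := by
  rw [← coeff_zero_eq_constantCoeff_apply, series, coeff_mk, FdBgen_zero, map_zero]

theorem hasSubst_series (ι : FdB →ₐ[ℝ] C) : HasSubst (series ι) :=
  HasSubst.of_constantCoeff_zero' (constantCoeff_series ι)

theorem series_injective : Function.Injective (series (C := C)) := by
  intro ι ι' h
  apply MvPolynomial.algHom_ext
  rintro ⟨n, hn⟩
  simpa [series, FdBgen, hn] using congr_arg (coeff n) h

theorem map_FdBcoprodVal (ψ : FdB ⊗[ℝ] FdB →ₐ[ℝ] C) (m : ℕ) :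
    ψ (FdBcoprodVal m) =
      coeff m ((series (ψ.comp includeRight)).subst (series (ψ.comp includeLeft))) := by
  rw [coeff_subst_eq_sum_compositions (constantCoeff_series _) (constantCoeff_series _),
    FdBcoprodVal, map_sum]
  refine sum_congr rfl fun k _ => ?_
  rw [← one_mul (FdBgen k), ← mul_one (∑ l ∈ _, _), ← tmul_mul_tmul, map_mul]
  change (ψ.comp includeLeft) _ * (ψ.comp includeRight) _ = _
  simp only [map_sum, map_prod, series, coeff_mk]

theorem series_comp_coprod (Δ : FdB →ₐ[ℝ] FdB ⊗[ℝ] FdB)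
    (hΔ : ∀ (n : ℕ) (h : 2 ≤ n), Δ (MvPolynomial.X ⟨n, h⟩) = FdBcoprodVal n)
    (ψ : FdB ⊗[ℝ] FdB →ₐ[ℝ] C) :
    series (ψ.comp Δ) = (series (ψ.comp includeRight)).subst (series (ψ.comp includeLeft)) := by
  ext m
  rw [series, coeff_mk, AlgHom.comp_apply, map_FdBgen_of_map_X Δ hΔ, map_FdBcoprodVal]

end FdB

open FdB

/-- The Faà di Bruno coproduct, i.e. the (unique) `ℝ`-algebra homomorphism
`Δ : FdB → FdB ⊗ FdB` with `Δ(a_n)` as displayed, is coassociative. -/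
theorem stmt8 (Δ : FdB →ₐ[ℝ] FdB ⊗[ℝ] FdB)
    (hΔ : ∀ (n : ℕ) (h : 2 ≤ n), Δ (MvPolynomial.X ⟨n, h⟩) = FdBcoprodVal n) :
    ∀ p : FdB,
      (Algebra.TensorProduct.assoc ℝ ℝ ℝ FdB FdB FdB)
          ((Algebra.TensorProduct.map Δ (AlgHom.id ℝ FdB)) (Δ p)) =
        (Algebra.TensorProduct.map (AlgHom.id ℝ FdB) Δ) (Δ p) := by
  let e := (Algebra.TensorProduct.assoc ℝ ℝ ℝ FdB FdB FdB).toAlgHom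
  let ΔL := e.comp (map Δ (AlgHom.id ℝ FdB))
  let ΔR := map (AlgHom.id ℝ FdB) Δ
  have hΔL : ΔL.comp includeLeft = (e.comp includeLeft).comp Δ := by ext; simp [ΔL, e]
  have hΔR : ΔR.comp includeRight = includeRight.comp Δ := by ext; simp [ΔR]
  have h₁ : (e.comp includeLeft).comp includeLeft = ΔR.comp includeLeft := by
    ext; simp [ΔR, e, Algebra.TensorProduct.one_def]
  have h₂ : (e.comp includeLeft).comp includeRight = includeRight.comp (includeLeft (S := ℝ)) := by
    ext; simp [e]
  have h₃ : ΔL.comp includeRight = includeRight.comp (includeRight (A := FdB)) := by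
    ext; simp [ΔL, e, Algebra.TensorProduct.one_def]
  suffices h : ΔL.comp Δ = ΔR.comp Δ from fun p => DFunLike.congr_fun h p
  refine series_injective (C := FdB ⊗[ℝ] (FdB ⊗[ℝ] FdB)) ?_
  rw [series_comp_coprod Δ hΔ, series_comp_coprod Δ hΔ, hΔL, hΔR, series_comp_coprod Δ hΔ,
    series_comp_coprod Δ hΔ, subst_comp_subst_apply (hasSubst_series _) (hasSubst_series _),
    h₁, h₂, h₃]
end

section
/- Let A = ℝ[a₂, a₃, a₄, …] be the polynomial ℝ-algebra in variables a_n, n ≥ 2, and let D_X and D_Y be the ℝ-linear derivations of A determined on generators by D_X(a_n) = (n+1)a_{n+1} − 2a₂a_n and D_Y(a_n) = (n−1)a_n for all n ≥ 2. Then the commutator satisfies D_Y ∘ D_X − D_X ∘ D_Y = D_X. -/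
/-!
Both sides are derivations of a polynomial algebra, so it suffices to compare them on the
generators. There `D_Y` is the Euler derivation for the grading `deg a_n = n - 1`, and `D_X`
raises this degree by one, whence `[D_Y, D_X] a_n = D_X a_n`.
-/

namespace Derivation

variable {R A M : Type*} [CommSemiring R] [CommSemiring A] [AddCommMonoid M] [Algebra R A]
  [Module A M] [Module R M] (D : Derivation R A M)

theorem map_mul_of_map_eq_zero {a : A} (ha : D a = 0) (b : A) : D (a * b) = a • D b := by
  rw [leibniz, ha, smul_zero, add_zero]

end Derivation

/-- If `D_X`, `D_Y` are the derivations of `ℝ[a₂, a₃, …]` determined on the generators by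
`D_X(a_n) = (n+1) a_{n+1} - 2 a₂ a_n` and `D_Y(a_n) = (n-1) a_n`, then
`D_Y ∘ D_X - D_X ∘ D_Y = D_X`. -/
theorem stmt10 (DX DY : Derivation ℝ FdB FdB)
    (hX : ∀ (n : ℕ) (hn : 2 ≤ n),
      DX (MvPolynomial.X ⟨n, hn⟩) =
        ((n : FdB) + 1) * MvPolynomial.X ⟨n + 1, by omega⟩ -
          2 * MvPolynomial.X ⟨2, le_refl 2⟩ * MvPolynomial.X ⟨n, hn⟩)
    (hY : ∀ (n : ℕ) (hn : 2 ≤ n),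
      DY (MvPolynomial.X ⟨n, hn⟩) = ((n : FdB) - 1) * MvPolynomial.X ⟨n, hn⟩) :
    ∀ p : FdB, DY (DX p) - DX (DY p) = DX p := by
  have hbracket : ⁅DY, DX⁆ = DX := by
    refine MvPolynomial.derivation_ext fun ⟨n, hn⟩ => ?_
    have hconst (D : Derivation ℝ FdB FdB) :
        D ((n : FdB) + 1) = 0 ∧ D ((n : FdB) - 1) = 0 ∧ D 2 = 0 := by
      simpa using D.map_natCast 2
    rw [Derivation.commutator_apply, hX, hY, mul_assoc 2]
    simp only [map_sub, Derivation.map_mul_of_map_eq_zero _ (hconst _).1,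
      Derivation.map_mul_of_map_eq_zero _ (hconst _).2.1,
      Derivation.map_mul_of_map_eq_zero _ (hconst _).2.2, Derivation.leibniz, hX, hY, smul_eq_mul]
    push_cast
    ring
  intro p
  rw [← Derivation.commutator_apply, hbracket]
end

section
/- Let A be the supercommutative ℝ-superalgebra freely generated by even generators a_n (n ≥ 2) and d_n (n ≥ 1) and odd generators b_n (n ≥ 1) and c_n (n ≥ 2) — concretely, A is the tensor product of the polynomial algebra on the a_n, d_n with the exterior algebra on the b_n, c_n — with the conventions a₀ = 0, a₁ = 1, d₀ = 1, b₀ = 0, c₀ = c₁ = 0. Let D_X, D_Y, D_Z be ℝ-linear derivations of A determined on the generators by: D_X(a_n) = (n+1)a_{n+1} − 2a_n a₂ − b₁c_n, D_X(b_n) = (n+1)b_{n+1} − 2b_n a₂ − b₁d_n, D_X(c_n) = −2c₂a_n + (n+1)c_{n+1} − c_n d₁, D_X(d_n) = −2c₂b_n + (n+1)d_{n+1} − d_n d₁; D_Y(a_n) = (n−1)a_n, D_Y(b_n) = (n−1)b_n, D_Y(c_n) = n·c_n, D_Y(d_n) = n·d_n; D_Z(a_n) = 0, D_Z(b_n) =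 b_n, D_Z(c_n) = −c_n, D_Z(d_n) = 0. Then D_Y ∘ D_X − D_X ∘ D_Y = D_X, D_X ∘ D_Z − D_Z ∘ D_X = 0, and D_Y ∘ D_Z − D_Z ∘ D_Y = 0. -/
/-!
The operators `D_Y` and `D_Z` act diagonally on the generators, with `D_Y`-weights `n - 1`,
`n - 1`, `n`, `n` and `D_Z`-charges `0`, `1`, `-1`, `0` on `a_n`, `b_n`, `c_n`, `d_n`, and `D_X`
sends each generator to a combination of products of generators whose weight is one higher and
whose charge is the same. Since the commutator of two Leibniz maps is again Leibniz, and a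
Leibniz map vanishing on algebra generators vanishes, `⁅D, E⁆ = c • E` only has to be checked on
generators, where it reads `D (E x) = (μ + c) • E x` for `D x = μ • x`.
-/

open scoped TensorProduct

set_option maxHeartbeats 1000000

/-- Index type for the even generators: `a_n` (`n ≥ 2`) and `d_n` (`n ≥ 1`). -/
abbrev SuperEvenVar : Type := {n : ℕ // 2 ≤ n} ⊕ {n : ℕ // 1 ≤ n}

/-- Index type for the odd generators: `b_n` (`n ≥ 1`) and `c_n` (`n ≥ 2`). -/
abbrev SuperOddVar : Type := {n : ℕ // 1 ≤ n} ⊕ {n : ℕ // 2 ≤ n}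

/-- The supercommutative `ℝ`-superalgebra freely generated by the even generators
`a_n` (`n ≥ 2`), `d_n` (`n ≥ 1`) and the odd generators `b_n` (`n ≥ 1`), `c_n` (`n ≥ 2`):
the tensor product of the polynomial algebra on the even generators with the exterior
algebra on the odd generators.  (All elements of the polynomial factor are even, so the
ordinary tensor product multiplication agrees with the super one.) -/
abbrev SuperFG2 : Type :=
  MvPolynomial SuperEvenVar ℝ ⊗[ℝ] ExteriorAlgebra ℝ (SuperOddVar →₀ ℝ)

noncomputable def aS (n : ℕ) : SuperFG2 :=
  if h : 2 ≤ n then MvPolynomial.X (Sum.inl ⟨n, h⟩) ⊗ₜ[ℝ] 1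
  else if n = 1 then 1 else 0

noncomputable def dS (n : ℕ) : SuperFG2 :=
  if h : 1 ≤ n then MvPolynomial.X (Sum.inr ⟨n, h⟩) ⊗ₜ[ℝ] 1 else 1

noncomputable def bS (n : ℕ) : SuperFG2 :=
  if h : 1 ≤ n then
    (1 : MvPolynomial SuperEvenVar ℝ) ⊗ₜ[ℝ]
      ExteriorAlgebra.ι ℝ (Finsupp.single (Sum.inl ⟨n, h⟩) (1 : ℝ))
  else 0

noncomputable def cS (n : ℕ) : SuperFG2 :=
  if h : 2 ≤ n then
    (1 : MvPolynomial SuperEvenVar ℝ) ⊗ₜ[ℝ]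
      ExteriorAlgebra.ι ℝ (Finsupp.single (Sum.inr ⟨n, h⟩) (1 : ℝ))
  else 0

section Leibniz

variable {R A : Type*} [CommRing R] [Ring A] [Algebra R A]

-- Mathlib's `Derivation` requires a commutative algebra, which `SuperFG2` is not.
def IsLeibniz (D : Module.End R A) : Prop :=
  ∀ x y : A, D (x * y) = D x * y + x * D y

namespace IsLeibniz

variable {D E : Module.End R A}

theorem map_one_eq_zero (hD : IsLeibniz D) : D 1 = 0 := by
  simpa using hD 1 1

theorem sub (hD : IsLeibniz D) (hE : IsLeibniz E) : IsLeibniz (D - E) := fun x y => by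
  simp only [LinearMap.sub_apply, hD x y, hE x y, sub_mul, mul_sub]
  abel

theorem smul (hD : IsLeibniz D) (c : R) : IsLeibniz (c • D) := fun x y => by
  simp only [LinearMap.smul_apply, hD x y, smul_add, smul_mul_assoc, mul_smul_comm]

theorem lie (hD : IsLeibniz D) (hE : IsLeibniz E) : IsLeibniz ⁅D, E⁆ := fun x y => by
  simp only [Ring.lie_def, LinearMap.sub_apply, Module.End.mul_apply, hD _ _, hE _ _, map_add,
    sub_mul, mul_sub]
  abel

def constants (hD : IsLeibniz D) : Subalgebra R A where
  carrier := {x | D x = 0}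
  mul_mem' {x y} hx hy := by simp_all [hD x y]
  add_mem' {x y} hx hy := by simp_all
  algebraMap_mem' r := by simp [Algebra.algebraMap_eq_smul_one, hD.map_one_eq_zero]

theorem eq_zero_of_adjoin_eq_top (hD : IsLeibniz D) {s : Set A}
    (hs : Algebra.adjoin R s = ⊤) (h : ∀ x ∈ s, D x = 0) : D = 0 := by
  have htop : hD.constants = ⊤ := top_le_iff.mp (hs ▸ Algebra.adjoin_le h)
  ext x
  exact (htop ▸ Algebra.mem_top : x ∈ hD.constants)

theorem lie_eq_smul_of_adjoin_eq_top (hD : IsLeibniz D) (hE : IsLeibniz E) {s : Set A}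
    (hs : Algebra.adjoin R s = ⊤) (c : R)
    (h : ∀ x ∈ s, ∃ μ, D x = μ • x ∧ D (E x) = (μ + c) • E x) : ⁅D, E⁆ = c • E := by
  refine sub_eq_zero.mp <| ((hD.lie hE).sub (hE.smul c)).eq_zero_of_adjoin_eq_top hs fun x hx => ?_
  obtain ⟨μ, hDx, hDEx⟩ := h x hx
  simp only [LinearMap.sub_apply, Ring.lie_def, Module.End.mul_apply, LinearMap.smul_apply, hDx,
    hDEx, map_smul]
  module

end IsLeibniz

end Leibniz

theorem Algebra.TensorProduct.adjoin_image_includeLeft_union_image_includeRight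
    {R A B : Type*} [CommSemiring R] [Semiring A] [Semiring B] [Algebra R A] [Algebra R B]
    {s : Set A} {t : Set B} (hs : Algebra.adjoin R s = ⊤) (ht : Algebra.adjoin R t = ⊤) :
    Algebra.adjoin R (includeLeft (S := R) '' s ∪ includeRight '' t : Set (A ⊗[R] B)) = ⊤ := by
  rw [Algebra.adjoin_union, ← AlgHom.map_adjoin, ← AlgHom.map_adjoin, hs, ht, Algebra.map_top,
    Algebra.map_top]
  simpa using (map_range (AlgHom.id R A) (AlgHom.id R B)).symm

theorem ExteriorAlgebra.adjoin_image_ι_eq_top {R M : Type*} [CommRing R] [AddCommGroup M]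
    [Module R M] {s : Set M} (hs : Submodule.span R s = ⊤) :
    Algebra.adjoin R (ι R '' s) = ⊤ := by
  refine top_le_iff.mp <| CliffordAlgebra.adjoin_range_ι (Q := (0 : QuadraticForm R M)) ▸
    Algebra.adjoin_le ?_
  rintro _ ⟨v, rfl⟩
  refine Algebra.span_le_adjoin R _ ?_
  rw [← Submodule.map_span, hs]
  exact Submodule.mem_map_of_mem Submodule.mem_top

def superGenerators : Set SuperFG2 :=
  aS '' {n | 2 ≤ n} ∪ bS '' {n | 1 ≤ n} ∪ cS '' {n | 2 ≤ n} ∪ dS '' {n | 1 ≤ n}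

theorem adjoin_superGenerators : Algebra.adjoin ℝ superGenerators = ⊤ := by
  refine top_le_iff.mp <| Algebra.TensorProduct.adjoin_image_includeLeft_union_image_includeRight
    MvPolynomial.adjoin_range_X (ExteriorAlgebra.adjoin_image_ι_eq_top
      (Finsupp.basisSingleOne (R := ℝ) (ι := SuperOddVar)).span_eq) ▸ Algebra.adjoin_mono ?_
  rintro _ (⟨_, ⟨⟨n, hn⟩ | ⟨n, hn⟩, rfl⟩, rfl⟩ | ⟨_, ⟨_, ⟨⟨n, hn⟩ | ⟨n, hn⟩, rfl⟩, rfl⟩, rfl⟩)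
  · exact Or.inl <| Or.inl <| Or.inl ⟨n, hn, by simp [aS, hn]⟩
  · exact Or.inr ⟨n, hn, by simp [dS, hn]⟩
  · exact Or.inl <| Or.inl <| Or.inr ⟨n, hn, by simp [bS, hn]⟩
  · exact Or.inl <| Or.inr ⟨n, hn, by simp [cS, hn]⟩

theorem forall_mem_superGenerators {P : SuperFG2 → Prop} (ha : ∀ n, 2 ≤ n → P (aS n))
    (hb : ∀ n, 1 ≤ n → P (bS n)) (hc : ∀ n, 2 ≤ n → P (cS n)) (hd : ∀ n, 1 ≤ n → P (dS n)) :
    ∀ x ∈ superGenerators, P x := by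
  rintro _ (((⟨n, hn, rfl⟩ | ⟨n, hn, rfl⟩) | ⟨n, hn, rfl⟩) | ⟨n, hn, rfl⟩)
  exacts [ha n hn, hb n hn, hc n hn, hd n hn]

/-- If `D_X`, `D_Y`, `D_Z` are the (ordinary, `ℝ`-linear, Leibniz) derivations of the
supercommutative algebra `ℝ[a_n, b_n, c_n, d_n]` determined on the generators by the
formulas of Lemma 4 (action of the even generators `X`, `Y`, `Z` of `𝔤₁ˢ`), then
`[D_Y, D_X] = D_X`, `[D_X, D_Z] = 0` and `[D_Y, D_Z] = 0`. -/
theorem stmt15 (DX DY DZ : SuperFG2 →ₗ[ℝ] SuperFG2)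
    (hXleib : ∀ x y : SuperFG2, DX (x * y) = DX x * y + x * DX y)
    (hYleib : ∀ x y : SuperFG2, DY (x * y) = DY x * y + x * DY y)
    (hZleib : ∀ x y : SuperFG2, DZ (x * y) = DZ x * y + x * DZ y)
    (hXa : ∀ n : ℕ, 2 ≤ n →
      DX (aS n) = ((n : ℝ) + 1) • aS (n + 1) - (2 : ℝ) • (aS n * aS 2) - bS 1 * cS n)
    (hXb : ∀ n : ℕ, 1 ≤ n →
      DX (bS n) = ((n : ℝ) + 1) • bS (n + 1) - (2 : ℝ) • (bS n * aS 2) - bS 1 * dS n)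
    (hXc : ∀ n : ℕ, 2 ≤ n →
      DX (cS n) = -((2 : ℝ) • (cS 2 * aS n)) + ((n : ℝ) + 1) • cS (n + 1) - cS n * dS 1)
    (hXd : ∀ n : ℕ, 1 ≤ n →
      DX (dS n) = -((2 : ℝ) • (cS 2 * bS n)) + ((n : ℝ) + 1) • dS (n + 1) - dS n * dS 1)
    (hYa : ∀ n : ℕ, 2 ≤ n → DY (aS n) = ((n : ℝ) - 1) • aS n)
    (hYb : ∀ n : ℕ, 1 ≤ n → DY (bS n) = ((n : ℝ) - 1) • bS n)
    (hYc : ∀ n : ℕ, 2 ≤ n → DY (cS n) = (n : ℝ) • cS n)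
    (hYd : ∀ n : ℕ, 1 ≤ n → DY (dS n) = (n : ℝ) • dS n)
    (hZa : ∀ n : ℕ, 2 ≤ n → DZ (aS n) = 0)
    (hZb : ∀ n : ℕ, 1 ≤ n → DZ (bS n) = bS n)
    (hZc : ∀ n : ℕ, 2 ≤ n → DZ (cS n) = -cS n)
    (hZd : ∀ n : ℕ, 1 ≤ n → DZ (dS n) = 0) :
    (∀ p : SuperFG2, DY (DX p) - DX (DY p) = DX p) ∧
    (∀ p : SuperFG2, DX (DZ p) - DZ (DX p) = 0) ∧
    (∀ p : SuperFG2, DY (DZ p) - DZ (DY p) = 0) := by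
  have hYX : ⁅DY, DX⁆ = (1 : ℝ) • DX := by
    refine IsLeibniz.lie_eq_smul_of_adjoin_eq_top hYleib hXleib adjoin_superGenerators 1 <|
      forall_mem_superGenerators (fun n hn => ⟨_, hYa n hn, ?_⟩) (fun n hn => ⟨_, hYb n hn, ?_⟩)
        (fun n hn => ⟨_, hYc n hn, ?_⟩) (fun n hn => ⟨_, hYd n hn, ?_⟩)
    all_goals
      simp (disch := omega) only [hXa, hXb, hXc, hXd, map_sub, map_add, map_neg, map_smul,
        hYleib, hYa, hYb, hYc, hYd, smul_mul_assoc, mul_smul_comm]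
      push_cast
      module
  -- `mul_neg` does not fire on the negation coming from the tensor product's additive group
  have hZc' : ∀ n, 2 ≤ n → DZ (cS n) = (-1 : ℝ) • cS n := fun n hn =>
    (hZc n hn).trans (neg_one_smul ℝ (cS n)).symm
  have hZX : ⁅DZ, DX⁆ = (0 : ℝ) • DX := by
    refine IsLeibniz.lie_eq_smul_of_adjoin_eq_top hZleib hXleib adjoin_superGenerators 0 <|
      forall_mem_superGenerators (fun n hn => ⟨0, by simp [hZa n hn], ?_⟩)
        (fun n hn => ⟨1, by simp [hZb n hn], ?_⟩) (fun n hn => ⟨-1, hZc' n hn, ?_⟩)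
        (fun n hn => ⟨0, by simp [hZd n hn], ?_⟩)
    all_goals
      simp (disch := omega) only [hXa, hXb, hXc, hXd, map_sub, map_add, map_neg, map_smul,
        hZleib, hZa, hZb, hZc', hZd, smul_mul_assoc, mul_smul_comm, zero_mul, mul_zero]
      module
  have hYZ : ⁅DY, DZ⁆ = (0 : ℝ) • DZ := by
    refine IsLeibniz.lie_eq_smul_of_adjoin_eq_top hYleib hZleib adjoin_superGenerators 0 <|
      forall_mem_superGenerators (fun n hn => ⟨_, hYa n hn, ?_⟩) (fun n hn => ⟨_, hYb n hn, ?_⟩)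
        (fun n hn => ⟨_, hYc n hn, ?_⟩) (fun n hn => ⟨_, hYd n hn, ?_⟩)
    all_goals simp (disch := omega) only [hZa, hZb, hZc', hZd, hYb, hYc, map_smul, map_zero]
    all_goals module
  refine ⟨fun p => ?_, fun p => ?_, fun p => ?_⟩
  · simpa [Ring.lie_def] using LinearMap.congr_fun hYX p
  · rw [← neg_sub, neg_eq_zero]
    simpa [Ring.lie_def] using LinearMap.congr_fun hZX p
  · simpa [Ring.lie_def] using LinearMap.congr_fun hYZ p
end
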